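/- Let K and L be convex bodies in ℝ² with C² boundaries of positive curvature containing the origin in their interiors. Then (∫_{S¹} (h_K/h_L) dV_K)·(∫_{S¹} (κ_K/κ_L) dV_L) ≥ V(K,L)². -/

import Mathlib

open Real MeasureTheory intervalIntegral

/-- The radius of curvature `1/κ = h + h''` of the convex body with support
function `h` (as a `2π`-periodic function of the normal angle). -/
noncomputable def bodyRho (h : ℝ → ℝ) (θ : ℝ) : ℝ := h θ + deriv (deriv h) θ

/-- The curvature `κ(u)` of the boundary at the point with outer normal angle `θ`,
so that `1/κ = h + h''`. -/
noncomputable def bodyCurv (h : ℝ → ℝ) (θ : ℝ) : ℝ := (bodyRho h θ)⁻¹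

/-- `h` is the support function of a planar convex body with `C²` boundary of
positive curvature: `h` is `C²`, `2π`-periodic and `h + h'' > 0`. -/
def IsSmoothBody (h : ℝ → ℝ) : Prop :=
  ContDiff ℝ 2 h ∧ Function.Periodic h (2 * π) ∧ ∀ θ : ℝ, 0 < bodyRho h θ

/-- The body is origin-symmetric iff its support function is `π`-antipodally invariant. -/
def OriginSymmetric (h : ℝ → ℝ) : Prop := ∀ θ : ℝ, h (θ + π) = h θ

/-- The area `V(K) = (1/2)∫_{S¹} h_K (h_K + h_K'') dθ`. -/
noncomputable def bodyArea (h : ℝ → ℝ) : ℝ :=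
  (1 / 2) * ∫ θ in (0:ℝ)..(2 * π), h θ * bodyRho h θ

/-- The perimeter `S(K) = ∫_{S¹} h_K dθ`. -/
noncomputable def bodyPerim (h : ℝ → ℝ) : ℝ := ∫ θ in (0:ℝ)..(2 * π), h θ

/-- The mixed volume `V(K, L) = (1/2)∫_{S¹} h_L (h_K + h_K'') dθ`. -/
noncomputable def bodyMixedVol (hK hL : ℝ → ℝ) : ℝ :=
  (1 / 2) * ∫ θ in (0:ℝ)..(2 * π), hL θ * bodyRho hK θ

/-- The integral `∫_{S¹} f dV_K` of `f` against the cone-volume measure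
`dV_K = (1/2) h_K dS_K = (1/2) h_K (h_K + h_K'') dθ`. -/
noncomputable def coneIntegral (h f : ℝ → ℝ) : ℝ :=
  (1 / 2) * ∫ θ in (0:ℝ)..(2 * π), f θ * (h θ * bodyRho h θ)

/-- Two bodies are dilates iff their support functions are positive multiples
of each other. -/
def AreDilates (hK hL : ℝ → ℝ) : Prop := ∃ c : ℝ, 0 < c ∧ ∀ θ : ℝ, hK θ = c * hL θ


/-!
Write `dV_{K,L} = (1/2) h_L ρ_K dθ` with `ρ = 1/κ = h + h''`. Pointwise,
`(h_K/h_L) dV_K = (h_K/h_L)² dV_{K,L}` and `(κ_K/κ_L) dV_L = (κ_K/κ_L)² dV_{K,L}`, while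
`(h_K/h_L)(κ_K/κ_L) dV_{K,L} = (1/2) h_K ρ_L dθ` integrates to `V(K,L)` because
`∫ h_K ρ_L = ∫ h_L ρ_K` (integrate `h_K h_L'' - h_K'' h_L` over a period). The inequality is
then Cauchy–Schwarz in `L²(dV_{K,L})`.
-/

theorem Function.Periodic.deriv {f : ℝ → ℝ} {c : ℝ} (hf : Function.Periodic f c) :
    Function.Periodic (deriv f) c := fun x => by
  rw [← deriv_comp_add_const, funext hf]

theorem sq_integral_mul_mul_le {a b : ℝ} (hab : a ≤ b) {f g w : ℝ → ℝ}
    (hf : Continuous f) (hg : Continuous g) (hw : Continuous w) (hw₀ : ∀ x, 0 ≤ w x) :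
    (∫ x in a..b, f x * g x * w x) ^ 2 ≤
      (∫ x in a..b, f x ^ 2 * w x) * ∫ x in a..b, g x ^ 2 * w x := by
  set A := ∫ x in a..b, f x ^ 2 * w x
  set B := ∫ x in a..b, f x * g x * w x
  set C := ∫ x in a..b, g x ^ 2 * w x
  have quadratic_nonneg (s : ℝ) : 0 ≤ C * (s * s) + (-2 * B) * s + A := by
    have expand : ∫ x in a..b, (s * g x - f x) ^ 2 * w x =
        C * (s * s) + (-2 * B) * s + A := by
      simp_rw [show ∀ x, (s * g x - f x) ^ 2 * w x =
          s * s * (g x ^ 2 * w x) + ((-2 * s) * (f x * g x * w x) + 1 * (f x ^ 2 * w x))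
        from fun x => by ring]
      rw [intervalIntegral.integral_add, intervalIntegral.integral_add,
        intervalIntegral.integral_const_mul, intervalIntegral.integral_const_mul,
        intervalIntegral.integral_const_mul]
      · ring
      all_goals exact Continuous.intervalIntegrable (by fun_prop) _ _
    exact expand ▸ integral_nonneg hab fun x _ => mul_nonneg (sq_nonneg _) (hw₀ x)
  have := discrim_le_zero quadratic_nonneg
  rw [discrim] at this
  nlinarith

theorem integral_mul_deriv_deriv_comm_of_periodic {u v : ℝ → ℝ} {T : ℝ}
    (hu : ContDiff ℝ 2 u) (hv : ContDiff ℝ 2 v)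
    (hu_per : Function.Periodic u T) (hv_per : Function.Periodic v T) :
    ∫ x in (0:ℝ)..T, u x * deriv (deriv v) x = ∫ x in (0:ℝ)..T, v x * deriv (deriv u) x := by
  have hu' := ((contDiff_succ_iff_deriv (n := 1)).1 hu).2.2
  have hv' := ((contDiff_succ_iff_deriv (n := 1)).1 hv).2.2
  have hasDeriv (x : ℝ) : HasDerivAt (fun y => u y * deriv v y - v y * deriv u y)
      (u x * deriv (deriv v) x - v x * deriv (deriv u) x) x := by
    refine (((hu.differentiable (by norm_num) x).hasDerivAt.fun_mul
      (hv'.differentiable one_ne_zero x).hasDerivAt).fun_sub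
      ((hv.differentiable (by norm_num) x).hasDerivAt.fun_mul
        (hu'.differentiable one_ne_zero x).hasDerivAt)).congr_deriv ?_
    ring
  have wronskian := integral_eq_sub_of_hasDerivAt (a := 0) (b := T) (fun x _ => hasDeriv x)
    (Continuous.intervalIntegrable (by fun_prop) _ _)
  rw [integral_sub (Continuous.intervalIntegrable (by fun_prop) _ _)
    (Continuous.intervalIntegrable (by fun_prop) _ _), hu_per.eq, hv_per.eq, hu_per.deriv.eq,
    hv_per.deriv.eq, sub_self, sub_eq_zero] at wronskian
  exact wronskian

theorem IsSmoothBody.continuous_bodyRho {h : ℝ → ℝ} (bh : IsSmoothBody h) :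
    Continuous (bodyRho h) := by
  have := bh.1
  unfold bodyRho
  fun_prop

theorem integral_mul_bodyRho_comm {hK hL : ℝ → ℝ} (bK : IsSmoothBody hK) (bL : IsSmoothBody hL) :
    ∫ θ in (0:ℝ)..(2 * π), hL θ * bodyRho hK θ = ∫ θ in (0:ℝ)..(2 * π), hK θ * bodyRho hL θ := by
  have hsplit {u v : ℝ → ℝ} (bu : IsSmoothBody u) (bv : IsSmoothBody v) :
      ∫ θ in (0:ℝ)..(2 * π), v θ * bodyRho u θ =
        (∫ θ in (0:ℝ)..(2 * π), v θ * u θ) + ∫ θ in (0:ℝ)..(2 * π), v θ * deriv (deriv u) θ := by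
    have := bu.1
    have := bv.1
    simp only [bodyRho, mul_add]
    exact integral_add (Continuous.intervalIntegrable (by fun_prop) _ _)
      (Continuous.intervalIntegrable (by fun_prop) _ _)
  rw [hsplit bK bL, hsplit bL bK,
    integral_mul_deriv_deriv_comm_of_periodic bL.1 bK.1 bL.2.1 bK.2.1]
  simp only [mul_comm]

/-- `∫ f dV_{K,L}` for the mixed cone-volume measure `dV_{K,L} = (1/2) h_L (h_K + h_K'') dθ`. -/
noncomputable def mixedConeIntegral (hK hL f : ℝ → ℝ) : ℝ :=
  (1 / 2) * ∫ θ in (0:ℝ)..(2 * π), f θ * (hL θ * bodyRho hK θ)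

theorem coneIntegral_div_eq_mixedConeIntegral {hK hL : ℝ → ℝ} (hL₀ : ∀ θ, hL θ ≠ 0) :
    coneIntegral hK (fun θ => hK θ / hL θ) =
      mixedConeIntegral hK hL (fun θ => (hK θ / hL θ) ^ 2) := by
  unfold coneIntegral mixedConeIntegral
  congr 1
  refine integral_congr fun θ _ => ?_
  field_simp [hL₀ θ]

theorem coneIntegral_curv_div_eq_mixedConeIntegral {hK hL : ℝ → ℝ}
    (hρK : ∀ θ, bodyRho hK θ ≠ 0) :
    coneIntegral hL (fun θ => bodyCurv hK θ / bodyCurv hL θ) =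
      mixedConeIntegral hK hL (fun θ => (bodyCurv hK θ / bodyCurv hL θ) ^ 2) := by
  unfold coneIntegral mixedConeIntegral bodyCurv
  congr 1
  refine integral_congr fun θ _ => ?_
  field_simp [hρK θ]

theorem mixedConeIntegral_div_mul_curv_div {hK hL : ℝ → ℝ} (bK : IsSmoothBody hK)
    (bL : IsSmoothBody hL) (hL₀ : ∀ θ, hL θ ≠ 0) :
    mixedConeIntegral hK hL (fun θ => hK θ / hL θ * (bodyCurv hK θ / bodyCurv hL θ)) =
      bodyMixedVol hK hL := by
  unfold mixedConeIntegral bodyMixedVol bodyCurv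
  rw [integral_mul_bodyRho_comm bK bL]
  congr 1
  refine integral_congr fun θ _ => ?_
  field_simp [hL₀ θ, (bK.2.2 θ).ne']

theorem sq_mixedConeIntegral_mul_le {hK hL f g : ℝ → ℝ} (bK : IsSmoothBody hK)
    (bL : IsSmoothBody hL) (pL : ∀ θ, 0 < hL θ) (hf : Continuous f) (hg : Continuous g) :
    mixedConeIntegral hK hL (fun θ => f θ * g θ) ^ 2 ≤
      mixedConeIntegral hK hL (fun θ => f θ ^ 2) * mixedConeIntegral hK hL (fun θ => g θ ^ 2) := by
  unfold mixedConeIntegral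
  beta_reduce
  have := sq_integral_mul_mul_le (w := fun θ => hL θ * bodyRho hK θ) two_pi_pos.le hf hg
    (bL.1.continuous.mul bK.continuous_bodyRho) fun θ => (mul_pos (pL θ) (bK.2.2 θ)).le
  nlinarith

theorem stmt8_general (hK hL : ℝ → ℝ) (bK : IsSmoothBody hK) (bL : IsSmoothBody hL)
    (pL : ∀ θ : ℝ, 0 < hL θ) :
    coneIntegral hK (fun θ => hK θ / hL θ) *
      coneIntegral hL (fun θ => bodyCurv hK θ / bodyCurv hL θ) ≥
      (bodyMixedVol hK hL) ^ 2 := by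
  have hL₀ θ := (pL θ).ne'
  have hcurv : Continuous fun θ => bodyCurv hK θ / bodyCurv hL θ :=
    (bK.continuous_bodyRho.inv₀ fun θ => (bK.2.2 θ).ne').div
      (bL.continuous_bodyRho.inv₀ fun θ => (bL.2.2 θ).ne')
      fun θ => inv_ne_zero (bL.2.2 θ).ne'
  rw [coneIntegral_div_eq_mixedConeIntegral hL₀,
    coneIntegral_curv_div_eq_mixedConeIntegral fun θ => (bK.2.2 θ).ne',
    ← mixedConeIntegral_div_mul_curv_div bK bL hL₀]
  exact sq_mixedConeIntegral_mul_le bK bL pL (bK.1.continuous.div bL.1.continuous hL₀) hcurv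

/-- For planar convex bodies `K, L` with `C²` boundaries of
positive curvature containing the origin in their interiors,
`(∫_{S¹} (h_K/h_L) dV_K) (∫_{S¹} (κ_K/κ_L) dV_L) ≥ V(K,L)²`. -/
theorem stmt8 (hK hL : ℝ → ℝ) (bK : IsSmoothBody hK) (bL : IsSmoothBody hL)
    (pK : ∀ θ : ℝ, 0 < hK θ) (pL : ∀ θ : ℝ, 0 < hL θ) :
    coneIntegral hK (fun θ => hK θ / hL θ) *
      coneIntegral hL (fun θ => bodyCurv hK θ / bodyCurv hL θ) ≥
      (bodyMixedVol hK hL) ^ 2 :=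
  stmt8_general hK hL bK bL pL
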